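/- The pseudoachromatic index of any geometric graph of order n is at most floor((n^2+n)/4). -/

import Mathlib

open scoped Classical

abbrev Pt : Type := ℝ × ℝ

/-- No three distinct points of `S` are collinear. -/
def GenPos (S : Finset Pt) : Prop :=
  ∀ p ∈ S, ∀ q ∈ S, ∀ r ∈ S, p ≠ q → q ≠ r → p ≠ r → ¬ Collinear ℝ ({p, q, r} : Set Pt)

/-- The closed straight-line segment of an (unordered) edge. -/
noncomputable def seg2 : Sym2 Pt → Set Pt :=
  Sym2.lift ⟨fun p q => segment ℝ p q, fun p q => segment_symm ℝ p q⟩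

/-- Two edges intersect: they share a point (common endpoint or crossing). -/
def SInter (e f : Sym2 Pt) : Prop := (seg2 e ∩ seg2 f).Nonempty

/-- A geometric graph: vertices in general position, straight-line edges. -/
structure GeomGraph where
  verts : Finset Pt
  edges : Finset (Sym2 Pt)
  genpos : GenPos verts
  edge_mem : ∀ e ∈ edges, ∀ p ∈ e, p ∈ verts
  edge_ne : ∀ e ∈ edges, ¬ e.IsDiag

/-- A coloring is complete on edge set `E` if every pair of used colors appears
on a pair of intersecting edges. -/
def CompleteOn (E : Finset (Sym2 Pt)) (c : Sym2 Pt → ℕ) : Prop :=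
  ∀ i ∈ E.image c, ∀ j ∈ E.image c, i ≠ j →
    ∃ e ∈ E, ∃ f ∈ E, c e = i ∧ c f = j ∧ SInter e f

/-- A coloring is proper if same-colored edges are disjoint. -/
def ProperOn (E : Finset (Sym2 Pt)) (c : Sym2 Pt → ℕ) : Prop :=
  ∀ e ∈ E, ∀ f ∈ E, e ≠ f → c e = c f → ¬ SInter e f

/-- Points in convex position. -/
def ConvexPos (S : Finset Pt) : Prop :=
  ∀ p ∈ S, p ∉ convexHull ℝ ((S : Set Pt) \ {p})

/-- Edge set of the complete geometric graph on `S`. -/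
noncomputable def edgeSet (S : Finset Pt) : Finset (Sym2 Pt) :=
  S.sym2.filter (fun e => ¬ e.IsDiag)

def ShareEndpoint (e f : Sym2 Pt) : Prop := ∃ p : Pt, p ∈ e ∧ p ∈ f

def Crossing (e f : Sym2 Pt) : Prop := SInter e f ∧ ¬ ShareEndpoint e f

/-- Number of unordered pairs of distinct edges of `E` satisfying the
(symmetric) relation `P`. -/
noncomputable def pairCount (E : Finset (Sym2 Pt)) (P : Sym2 Pt → Sym2 Pt → Prop) : ℕ :=
  ((E ×ˢ E).filter (fun q => q.1 ≠ q.2 ∧ P q.1 q.2)).card / 2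

/-- The `k`-th vertex (clockwise) of the regular `n`-gon. -/
noncomputable def pt (n k : ℕ) : Pt :=
  (Real.cos (2 * Real.pi * k / n), -Real.sin (2 * Real.pi * k / n))

/-- Vertex set of the regular `n`-gon. -/
noncomputable def ngon (n : ℕ) : Finset Pt := (Finset.range n).image (pt n)

/-- `pq` is a halving edge of `S`: each open half-plane bounded by the line
through `p` and `q` contains at least `⌊(n-2)/2⌋` points of `S`. -/
def IsHalvingPts (S : Finset Pt) (p q : Pt) : Prop :=
  (S.card - 2) / 2 ≤ (S.filter (fun r =>
      0 < (q.1 - p.1) * (r.2 - p.2) - (q.2 - p.2) * (r.1 - p.1))).card ∧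
  (S.card - 2) / 2 ≤ (S.filter (fun r =>
      (q.1 - p.1) * (r.2 - p.2) - (q.2 - p.2) * (r.1 - p.1) < 0)).card

/-- The edge `e_{i,j}` of the regular `n`-gon is halving. -/
def Halving (n i j : ℕ) : Prop := IsHalvingPts (ngon n) (pt n i) (pt n j)

/-- The edges `e_{i,j}` and `e_{i',j'}` of the regular `n`-gon intersect. -/
def EInter (n i j i' j' : ℕ) : Prop :=
  (segment ℝ (pt n i) (pt n j) ∩ segment ℝ (pt n i') (pt n j')).Nonempty

/-- `(e_{i,j}, e_{j+1,k})` is a halving pair. -/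
def HalvingPair (n i j k : ℕ) : Prop :=
  pt n i ≠ pt n j ∧ pt n (j + 1) ≠ pt n k ∧ ¬ EInter n i j (j + 1) k ∧
  (Halving n i (j + 1) ∨ Halving n i k ∨ Halving n j k)

/-! If `k` colours are used and `t` colour classes consist of a single edge, then
`2k ≤ |E| + t ≤ n(n-1)/2 + t`. By completeness the `t` singleton classes pairwise intersect, and
Perles' argument bounds such a family of segments by `n`: each segment is extreme at one of its
endpoints (all other segments there turn the same way from it), and no point is the extreme
endpoint of two segments. Hence `2k ≤ n(n-1)/2 + n = n(n+1)/2`. -/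

open Finset

/-- Twice the signed area of the triangle `u v w`; positive iff `u, v, w` turn counterclockwise. -/
def orient (u v w : Pt) : ℝ := (v.1 - u.1) * (w.2 - u.2) - (v.2 - u.2) * (w.1 - u.1)

lemma orient_swap_right (u v w : Pt) : orient u w v = -orient u v w := by
  unfold orient; ring

lemma orient_swap_left (u v w : Pt) : orient v u w = -orient u v w := by
  unfold orient; ring

lemma exists_eq_smul_of_cross_eq_zero {x y : Pt} (hx : x ≠ 0) (h : x.1 * y.2 - x.2 * y.1 = 0) :
    ∃ r : ℝ, y = r • x := by
  by_cases h1 : x.1 = 0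
  · have h2 : x.2 ≠ 0 := fun h2 => hx (Prod.ext h1 h2)
    refine ⟨y.2 / x.2, Prod.ext ?_ ?_⟩
    · have : x.2 * y.1 = 0 := by rw [h1] at h; linarith
      simp [h1, (mul_eq_zero.1 this).resolve_left h2]
    · simp [h2]
  · refine ⟨y.1 / x.1, Prod.ext ?_ ?_⟩
    · simp [h1]
    · simp only [Prod.smul_snd, smul_eq_mul]
      field_simp
      linarith

lemma collinear_of_orient_eq_zero {u v w : Pt} (huv : u ≠ v) (h : orient u v w = 0) :
    Collinear ℝ ({u, v, w} : Set Pt) := by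
  obtain ⟨r, hr⟩ := exists_eq_smul_of_cross_eq_zero (y := w - u) (sub_ne_zero.2 huv.symm) h
  have hw : w ∈ line[ℝ, u, v] := by
    rw [← sub_add_cancel w u, hr]
    exact AffineMap.lineMap_mem_affineSpan_pair r u v
  exact collinear_triple_of_mem_affineSpan_pair (left_mem_affineSpan_pair ℝ u v)
    (right_mem_affineSpan_pair ℝ u v) hw

lemma GenPos.orient_ne_zero {S : Finset Pt} (hS : GenPos S) {u v w : Pt}
    (hu : u ∈ S) (hv : v ∈ S) (hw : w ∈ S) (huv : u ≠ v) (hvw : v ≠ w) (huw : u ≠ w) :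
    orient u v w ≠ 0 :=
  fun h => hS u hu v hv w hw huv hvw huw (collinear_of_orient_eq_zero huv h)

lemma exists_orient_eq_mul_of_mem_segment {u v p q z : Pt} (hp : orient u v p = 0)
    (hz : z ∈ segment ℝ p q) :
    ∃ t : ℝ, 0 ≤ t ∧ orient u v z = t * orient u v q ∧ (t = 0 → z = p) := by
  rw [segment_eq_image] at hz
  obtain ⟨t, ht, rfl⟩ := hz
  refine ⟨t, ht.1, ?_, fun ht0 => by simp [ht0]⟩
  unfold orient at hp ⊢
  simp only [Prod.fst_add, Prod.snd_add, Prod.smul_fst, Prod.smul_snd, smul_eq_mul]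
  linear_combination (1 - t) * hp

def IsExtremeAt (T : Finset (Sym2 Pt)) (u v : Pt) : Prop :=
  ∀ w, s(u, w) ∈ T → w ≠ v → 0 < orient u v w

section PairwiseIntersecting

variable {S : Finset Pt} {T : Finset (Sym2 Pt)}

lemma isExtremeAt_or_isExtremeAt (hS : GenPos S)
    (hmem : ∀ e ∈ T, ∀ p ∈ e, p ∈ S) (hnd : ∀ e ∈ T, ¬ e.IsDiag)
    (hint : (T : Set (Sym2 Pt)).Pairwise SInter) {u v : Pt} (he : s(u, v) ∈ T) :
    IsExtremeAt T u v ∨ IsExtremeAt T v u := by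
  by_contra! h
  simp only [IsExtremeAt, not_forall, not_lt] at h
  obtain ⟨⟨a, ha, hav, hva⟩, ⟨b, hb, hbu, hub⟩⟩ := h
  have hne : ∀ {x y : Pt}, s(x, y) ∈ T → x ≠ y := fun hxy h => hnd _ hxy (by simp [h])
  have huv := hne he
  have hu := hmem _ he u (Sym2.mem_mk_left u v)
  have hv := hmem _ he v (Sym2.mem_mk_right u v)
  have hva' : orient u v a < 0 :=
    hva.lt_of_ne (hS.orient_ne_zero hu hv (hmem _ ha a (Sym2.mem_mk_right u a)) huv hav.symm
      (hne ha))
  have hub' : orient v u b < 0 :=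
    hub.lt_of_ne (hS.orient_ne_zero hv hu (hmem _ hb b (Sym2.mem_mk_right v b)) huv.symm
      hbu.symm (hne hb))
  rw [orient_swap_left] at hub'
  have hab : s(u, a) ≠ s(v, b) := by
    rw [Ne, Sym2.eq_iff]
    rintro (⟨rfl, -⟩ | ⟨-, rfl⟩) <;> contradiction
  -- `ua` and `vb` leave the line `uv` to opposite sides, so they can only meet on it.
  obtain ⟨z, hza, hzb⟩ := hint ha hb hab
  simp only [seg2, Sym2.lift_mk] at hza hzb
  obtain ⟨t, ht, hzt, htu⟩ :=
    exists_orient_eq_mul_of_mem_segment (by unfold orient; ring : orient u v u = 0) hza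
  obtain ⟨r, hr, hzr, hrv⟩ :=
    exists_orient_eq_mul_of_mem_segment (by unfold orient; ring : orient u v v = 0) hzb
  have ht0 : t = 0 := by nlinarith
  have hr0 : r = 0 := by nlinarith
  exact huv ((htu ht0).symm.trans (hrv hr0))

theorem card_le_of_pairwise_sInter (hS : GenPos S)
    (hmem : ∀ e ∈ T, ∀ p ∈ e, p ∈ S) (hnd : ∀ e ∈ T, ¬ e.IsDiag)
    (hint : (T : Set (Sym2 Pt)).Pairwise SInter) : #T ≤ #S := by
  have hext : ∀ e ∈ T, ∃ u v, e = s(u, v) ∧ IsExtremeAt T u v := by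
    intro e he
    induction e using Sym2.ind with
    | _ u v =>
      rcases isExtremeAt_or_isExtremeAt hS hmem hnd hint he with h | h
      · exact ⟨u, v, rfl, h⟩
      · exact ⟨v, u, Sym2.eq_swap, h⟩
  choose! apex other hrepr hext using hext
  have hapex : ∀ e ∈ T, apex e ∈ e := fun e he => by
    have h := Sym2.mem_mk_left (apex e) (other e)
    rwa [← hrepr e he] at h
  refine card_le_card_of_injOn apex (fun e he => hmem e he _ (hapex e he)) fun e he f hf hef => ?_
  by_contra hne
  have hother : other e ≠ other f := fun h => hne ((hrepr e he).trans (hef ▸ h ▸ (hrepr f hf).symm))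
  have h1 := hext e he (other f) (by rw [hef, ← hrepr f hf]; exact hf) hother.symm
  have h2 := hext f hf (other e) (by rw [← hef, ← hrepr e he]; exact he) hother
  rw [hef, orient_swap_right] at h1
  linarith

end PairwiseIntersecting

def singletonFibers {α β : Type*} [DecidableEq α] [DecidableEq β] (s : Finset α) (f : α → β) :
    Finset α :=
  {a ∈ s | ∀ a' ∈ s, f a' = f a → a' = a}

/-- Each value taken at least twice costs two elements, each value taken once costs one. -/
lemma two_mul_card_image_le {α β : Type*} [DecidableEq α] [DecidableEq β] (s : Finset α)
    (f : α → β) : 2 * #(s.image f) ≤ #s + #(singletonFibers s f) := by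
  set U := singletonFibers s f
  have hU : U ⊆ s := filter_subset _ _
  have hsplit := card_union_le (U.image f) ((s \ U).image f)
  rw [← image_union, union_sdiff_of_subset hU] at hsplit
  have hrest : 2 * #((s \ U).image f) ≤ #(s \ U) := by
    refine mul_card_image_le_card _ 2 fun b hb => ?_
    obtain ⟨a, ha, rfl⟩ := mem_image.1 hb
    obtain ⟨has, haU⟩ := mem_sdiff.1 ha
    simp only [U, singletonFibers, mem_filter, has, true_and, not_forall] at haU
    obtain ⟨a', ha's, hfa', ha'a⟩ := haU
    have ha'U : a' ∉ U := fun h => ha'a ((mem_filter.1 h).2 a has hfa'.symm).symm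
    refine one_lt_card.2 ⟨a, mem_filter.2 ⟨ha, rfl⟩, a', mem_filter.2 ⟨?_, hfa'⟩, Ne.symm ha'a⟩
    exact mem_sdiff.2 ⟨ha's, ha'U⟩
  have := card_image_le (s := U) (f := f)
  have := card_sdiff_of_subset hU
  have := card_le_card hU
  omega

lemma CompleteOn.pairwise_sInter {E : Finset (Sym2 Pt)} {c : Sym2 Pt → ℕ} (hc : CompleteOn E c) :
    (singletonFibers E c : Set (Sym2 Pt)).Pairwise SInter := by
  intro e he f hf hef
  simp only [singletonFibers, coe_filter] at he hf
  have hcef : c e ≠ c f := fun h => hef (hf.2 e he.1 h)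
  obtain ⟨e', he', f', hf', hce', hcf', hint⟩ :=
    hc _ (mem_image_of_mem c he.1) _ (mem_image_of_mem c hf.1) hcef
  rwa [he.2 e' he' hce', hf.2 f' hf' hcf'] at hint

lemma GeomGraph.card_edges_le (G : GeomGraph) : #G.edges ≤ (#G.verts).choose 2 := by
  rw [← Sym2.card_image_offDiag]
  refine card_le_card fun e he => ?_
  induction e using Sym2.ind with
  | _ u v =>
    refine mem_image.2 ⟨(u, v), mem_offDiag.2 ⟨?_, ?_, ?_⟩, rfl⟩
    · exact G.edge_mem _ he u (Sym2.mem_mk_left u v)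
    · exact G.edge_mem _ he v (Sym2.mem_mk_right u v)
    · exact fun h => G.edge_ne _ he (Sym2.mk_isDiag_iff.2 h)

/-- The pseudoachromatic index of any geometric graph of order `n` is at most
`⌊(n² + n)/4⌋`. -/
theorem pseudoachromatic_upper (G : GeomGraph) (c : Sym2 Pt → ℕ)
    (hc : CompleteOn G.edges c) :
    (G.edges.image c).card ≤ (G.verts.card ^ 2 + G.verts.card) / 4 := by
  set n := #G.verts
  have hU : singletonFibers G.edges c ⊆ G.edges := filter_subset _ _
  have hUn : #(singletonFibers G.edges c) ≤ n := card_le_of_pairwise_sInter G.genpos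
    (fun e he => G.edge_mem e (hU he)) (fun e he => G.edge_ne e (hU he)) hc.pairwise_sInter
  have hpascal : n.choose 2 + n = (n + 1) * n / 2 := by
    have := Nat.choose_two_right (n + 1)
    rwa [Nat.choose_succ_succ, Nat.choose_one_right, Nat.add_sub_cancel, add_comm] at this
  have h2k : 2 * #(G.edges.image c) ≤ (n + 1) * n / 2 :=
    (two_mul_card_image_le G.edges c).trans (hpascal ▸ add_le_add G.card_edges_le hUn)
  rw [show n ^ 2 + n = (n + 1) * n by ring]
  generalize (n + 1) * n = m at h2k ⊢
  omega
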